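/- arXiv:2509.02954 — 3 statements merged into one kernel-verified Lean document; each statement's English description precedes it below -/
import Mathlib

section
/- Suppose Λ satisfies the stated Hölder continuity, and let K ⊂ ℝ^{n+1} be compact and M > 0. Then there exist constants C > 0 and r₀ > 0, depending only on K, Λ, β and M, such that: (i) if X, Y ∈ K, r > 0 and |X − Y| ≤ M·r, then B_Λ(X,r) ⊆ B_Λ(Y, r + λ_min(X)^{-1}|X − Y| + C·r^{1+β}); (ii) if in addition |X − Y| ≤ λ_min(X)·r/2 and r ≤ r₀, then r − λ_min(X)^{-1}|X − Y| − C·r^{1+β} > 0 and B_Λ(Y, r − λ_min(X)^{-1}|X − Y| − C·r^{1+β}) ⊆ B_Λ(X,r). -/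
open MeasureTheory Metric Filter
open scoped RealInnerProductSpace ENNReal Topology

noncomputable section

abbrev Euc (n : ℕ) : Type := EuclideanSpace ℝ (Fin (n + 1))

/-- A continuous linear equivalence regarded as a continuous linear map. -/
def clm {n : ℕ} (A : Euc n ≃L[ℝ] Euc n) : Euc n →L[ℝ] Euc n := A

/-- Smallest eigenvalue of a symmetric operator, via the Rayleigh quotient. -/
def lamMin {n : ℕ} (A : Euc n →L[ℝ] Euc n) : ℝ :=
  sInf {t : ℝ | ∃ v : Euc n, ‖v‖ = 1 ∧ ⟪A v, v⟫ = t}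

/-- Largest eigenvalue of a symmetric operator, via the Rayleigh quotient. -/
def lamMax {n : ℕ} (A : Euc n →L[ℝ] Euc n) : ℝ :=
  sSup {t : ℝ | ∃ v : Euc n, ‖v‖ = 1 ∧ ⟪A v, v⟫ = t}

/-- Symmetric positive definite operator. -/
def IsSymPD {n : ℕ} (A : Euc n →L[ℝ] Euc n) : Prop :=
  (∀ v w : Euc n, ⟪A v, w⟫ = ⟪v, A w⟫) ∧ ∀ v : Euc n, v ≠ 0 → 0 < ⟪A v, v⟫

/-- Local Hölder continuity (with exponent β) of a matrix-valued map, in operator norm. -/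
def HolderOnCompacts {n : ℕ} (Λ : Euc n → (Euc n ≃L[ℝ] Euc n)) (β : ℝ) : Prop :=
  ∀ K : Set (Euc n), IsCompact K → ∃ H > 0, ∀ X ∈ K, ∀ Y ∈ K,
    ‖clm (Λ X) - clm (Λ Y)‖ ≤ H * ‖X - Y‖ ^ β

/-- The ellipse `B_Λ(X, r) = X + Λ(X)·B(0,r)`. -/
def BLam {n : ℕ} (Λ : Euc n → (Euc n ≃L[ℝ] Euc n)) (X : Euc n) (r : ℝ) :
    Set (Euc n) :=
  (fun W => X + (Λ X) W) '' Metric.ball (0 : Euc n) r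

/-- The non-concentric ellipse `B_Λ(X, X̄, r) = X + Λ(X̄)·B(0,r)`. -/
def BLam2 {n : ℕ} (Λ : Euc n → (Euc n ≃L[ℝ] Euc n)) (X Xb : Euc n) (r : ℝ) :
    Set (Euc n) :=
  (fun W => X + (Λ Xb) W) '' Metric.ball (0 : Euc n) r

/-- Lebesgue measure of the unit ball of `ℝ^n`. -/
def omegaN (n : ℕ) : ℝ :=
  (MeasureTheory.volume (Metric.ball (0 : EuclideanSpace ℝ (Fin n)) 1)).toReal

/-- Support of a measure. -/
def msupport {n : ℕ} (μ : Measure (Euc n)) : Set (Euc n) :=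
  {X | ∀ r : ℝ, 0 < r → 0 < μ (Metric.ball X r)}

/-- Density assumption of Theorem 1: Hölder convergence of anisotropic density ratios to 1. -/
def DensityHolder {n : ℕ} (Λ : Euc n → (Euc n ≃L[ℝ] Euc n)) (μ : Measure (Euc n)) (α : ℝ) :
    Prop :=
  ∀ K : Set (Euc n), IsCompact K → ∃ C > 0, ∀ X ∈ msupport μ ∩ K, ∀ r : ℝ, 0 < r → r ≤ 1 →
    |(μ (BLam Λ X r)).toReal / (omegaN n * r ^ n) - 1| ≤ C * r ^ α

/-- Doubling assumption of Theorem 2: Hölder asymptotically optimal doubling. -/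
def DoublingHolder {n : ℕ} (Λ : Euc n → (Euc n ≃L[ℝ] Euc n)) (μ : Measure (Euc n)) (α : ℝ) :
    Prop :=
  ∀ K : Set (Euc n), IsCompact K → ∃ C > 0, ∀ X ∈ msupport μ ∩ K,
    ∀ t ∈ Set.Icc (1 / 2 : ℝ) 1, ∀ r : ℝ, 0 < r → r ≤ 1 →
      |(μ (BLam Λ X (t * r))).toReal / (μ (BLam Λ X r)).toReal - t ^ n| ≤ C * r ^ α

/-- `μ` is Λ-asymptotically optimally doubling of dimension `m`. -/
def IsLamAOD {n : ℕ} (Λ : Euc n → (Euc n ≃L[ℝ] Euc n)) (μ : Measure (Euc n)) (m : ℕ) : Prop :=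
  ∀ K : Set (Euc n), IsCompact K → ∀ ε : ℝ, 0 < ε → ∃ r₀ > 0, ∀ r : ℝ, 0 < r → r ≤ r₀ →
    ∀ X ∈ msupport μ ∩ K, ∀ t ∈ Set.Icc (1 / 2 : ℝ) 1,
      |(μ (BLam Λ X (t * r))).toReal / (μ (BLam Λ X r)).toReal - t ^ m| ≤ ε

/-- Anisotropic blow-up map `T^Λ_{P,r}(Z) = Λ(P)⁻¹((Z − P)/r)`. -/
def TLam {n : ℕ} (Λ : Euc n → (Euc n ≃L[ℝ] Euc n)) (P : Euc n) (r : ℝ)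
    (Z : Euc n) : Euc n :=
  (Λ P).symm (r⁻¹ • (Z - P))

/-- The rescaled measure `μ_{P,r} = μ(B_Λ(P,r))⁻¹ · (T^Λ_{P,r})_* μ`. -/
def scaled {n : ℕ} (Λ : Euc n → (Euc n ≃L[ℝ] Euc n)) (μ : Measure (Euc n))
    (P : Euc n) (r : ℝ) : Measure (Euc n) :=
  (μ (BLam Λ P r))⁻¹ • Measure.map (TLam Λ P r) μ

/-- Weak convergence of a sequence of measures tested against `C_c` functions. -/
def WeakLim {n : ℕ} (μs : ℕ → Measure (Euc n)) (ν : Measure (Euc n)) : Prop :=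
  ∀ f : Euc n → ℝ, Continuous f → HasCompactSupport f →
    Tendsto (fun i => ∫ x, f x ∂(μs i)) atTop (nhds (∫ x, f x ∂ν))

/-- `ν` is a Λ-pseudo tangent measure of `μ` at `Q`. -/
def IsPseudoTangentAt {n : ℕ} (Λ : Euc n → (Euc n ≃L[ℝ] Euc n)) (μ : Measure (Euc n))
    (Q : Euc n) (ν : Measure (Euc n)) : Prop :=
  ν ≠ 0 ∧ ∃ Qs : ℕ → Euc n, ∃ ρs : ℕ → ℝ,
    (∀ i, Qs i ∈ msupport μ) ∧ (∀ i, 0 < ρs i) ∧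
    Tendsto Qs atTop (nhds Q) ∧ Tendsto ρs atTop (nhds (0 : ℝ)) ∧
    WeakLim (fun i => scaled Λ μ (Qs i) (ρs i)) ν

/-- `λ_min(K)`: infimum of smallest eigenvalues over the 1-neighborhood of `S`. -/
def lamMinOn {n : ℕ} (Λ : Euc n → (Euc n ≃L[ℝ] Euc n)) (S : Set (Euc n)) : ℝ :=
  sInf ((fun X => lamMin (clm (Λ X))) '' {X : Euc n | Metric.infDist X S ≤ 1})

/-- `λ_max(K)`: supremum of largest eigenvalues over the 1-neighborhood of `S`. -/
def lamMaxOn {n : ℕ} (Λ : Euc n → (Euc n ≃L[ℝ] Euc n)) (S : Set (Euc n)) : ℝ :=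
  sSup ((fun X => lamMax (clm (Λ X))) '' {X : Euc n | Metric.infDist X S ≤ 1})

/-- Local eccentricity `e_Λ(K) = λ_max(K)/λ_min(K)`. -/
def eLam {n : ℕ} (Λ : Euc n → (Euc n ≃L[ℝ] Euc n)) (S : Set (Euc n)) : ℝ :=
  lamMaxOn Λ S / lamMinOn Λ S

/-- Bilateral β-number `bβ_S(X,r)`: infimum over affine `m`-planes through `X` of the
normalized Hausdorff distance between `S` and the plane inside `B(X,r)`. -/
def bbeta {n : ℕ} (m : ℕ) (S : Set (Euc n)) (X : Euc n) (r : ℝ) : ℝ :=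
  sInf {d : ℝ | ∃ P : AffineSubspace ℝ (Euc n), X ∈ P ∧ Module.finrank ℝ P.direction = m ∧
    d = (1 / r) * Metric.hausdorffDist (S ∩ Metric.ball X r)
          ((P : Set (Euc n)) ∩ Metric.ball X r)}

/-- Unilateral (Jones-type) β-number `β_S(X,r)`. -/
def betaS {n : ℕ} (m : ℕ) (S : Set (Euc n)) (X : Euc n) (r : ℝ) : ℝ :=
  sInf {d : ℝ | ∃ P : AffineSubspace ℝ (Euc n), X ∈ P ∧ Module.finrank ℝ P.direction = m ∧
    d = sSup {t : ℝ | ∃ Y ∈ S ∩ Metric.ball X r, t = Metric.infDist Y (P : Set (Euc n)) / r}}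

/-- The singular set: points where the bilateral β-numbers do not tend to 0. -/
def singularSet {n : ℕ} (m : ℕ) (S : Set (Euc n)) : Set (Euc n) :=
  {X | X ∈ S ∧ 0 < Filter.limsup (fun r => bbeta m S X r) (nhdsWithin 0 (Set.Ioi (0 : ℝ)))}

end


/-! Write `Z = X + Λ(X) W` as `Y + Λ(Y) W'` with `W' = W + Λ(Y)⁻¹ (X - Y + (Λ(X) - Λ(Y)) W)`.
Since `‖Λ(Y)⁻¹‖ ≤ λ_min(Y)⁻¹`, the radius grows by at most
`λ_min(Y)⁻¹ (|X - Y| + ‖Λ(X) - Λ(Y)‖ r)`. Hölder continuity makes `‖Λ(X) - Λ(Y)‖ = O(r^β)` when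
`|X - Y| = O(r)`, and the 1-Lipschitz dependence of `λ_min` on the operator, together with a
positive lower bound for `λ_min` on the compact set `K`, lets one replace `λ_min(Y)⁻¹` by
`λ_min(X)⁻¹` at the same cost `O(r^{1+β})`. The reverse inclusion is the same computation with
the roles of `X` and `Y` exchanged. -/

section Rayleigh

variable {n : ℕ}

lemma isCompact_rayleigh (A : Euc n →L[ℝ] Euc n) :
    IsCompact {t : ℝ | ∃ v : Euc n, ‖v‖ = 1 ∧ ⟪A v, v⟫ = t} := by
  have h : {t : ℝ | ∃ v : Euc n, ‖v‖ = 1 ∧ ⟪A v, v⟫ = t} =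
      (fun v => ⟪A v, v⟫) '' sphere (0 : Euc n) 1 := by
    ext; simp
  rw [h]
  exact (isCompact_sphere 0 1).image (by fun_prop)

lemma exists_inner_eq_lamMin (A : Euc n →L[ℝ] Euc n) :
    ∃ v : Euc n, ‖v‖ = 1 ∧ ⟪A v, v⟫ = lamMin A := by
  obtain ⟨v, hv⟩ := NormedSpace.sphere_nonempty (x := (0 : Euc n)).mpr zero_le_one
  exact (isCompact_rayleigh A).sInf_mem ⟨_, v, mem_sphere_zero_iff_norm.mp hv, rfl⟩

lemma lamMin_le_inner (A : Euc n →L[ℝ] Euc n) {v : Euc n} (hv : ‖v‖ = 1) :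
    lamMin A ≤ ⟪A v, v⟫ :=
  csInf_le (isCompact_rayleigh A).bddBelow ⟨v, hv, rfl⟩

lemma lamMin_mul_norm_sq_le_inner (A : Euc n →L[ℝ] Euc n) (v : Euc n) :
    lamMin A * ‖v‖ ^ 2 ≤ ⟪A v, v⟫ := by
  rcases eq_or_ne v 0 with rfl | hv
  · simp
  have hv' : 0 < ‖v‖ := norm_pos_iff.mpr hv
  have h := lamMin_le_inner A (v := ‖v‖⁻¹ • v) (by rw [norm_smul, norm_inv, norm_norm,
    inv_mul_cancel₀ hv'.ne'])
  rw [map_smul, real_inner_smul_left, real_inner_smul_right, ← mul_assoc, ← sq, inv_pow,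
    le_inv_mul_iff₀ (by positivity)] at h
  linarith

lemma lamMin_pos {A : Euc n →L[ℝ] Euc n} (hA : IsSymPD A) : 0 < lamMin A := by
  obtain ⟨v, hv, hvA⟩ := exists_inner_eq_lamMin A
  exact hvA ▸ hA.2 v (norm_ne_zero_iff.mp (by rw [hv]; exact one_ne_zero))

lemma lamMin_sub_norm_sub_le (A B : Euc n →L[ℝ] Euc n) : lamMin A - ‖A - B‖ ≤ lamMin B := by
  obtain ⟨v, hv, hvB⟩ := exists_inner_eq_lamMin B
  have hAB : ⟪(A - B) v, v⟫ ≤ ‖A - B‖ := by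
    calc ⟪(A - B) v, v⟫ ≤ ‖(A - B) v‖ * ‖v‖ := real_inner_le_norm _ _
      _ ≤ ‖A - B‖ * ‖v‖ * ‖v‖ := by gcongr; exact (A - B).le_opNorm v
      _ = ‖A - B‖ := by rw [hv, mul_one, mul_one]
  rw [sub_apply, inner_sub_left] at hAB
  linarith [lamMin_le_inner A hv]

lemma lipschitzWith_lamMin : LipschitzWith 1 (lamMin : (Euc n →L[ℝ] Euc n) → ℝ) :=
  LipschitzWith.of_le_add fun A B => by
    rw [dist_eq_norm]; linarith [lamMin_sub_norm_sub_le A B]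

lemma inv_lamMin_le_inv_lamMin_add {A B : Euc n →L[ℝ] Euc n} {l : ℝ} (hl : 0 < l)
    (hlA : l ≤ lamMin A) (hlB : l ≤ lamMin B) :
    (lamMin B)⁻¹ ≤ (lamMin A)⁻¹ + ‖A - B‖ / l ^ 2 := by
  have hA : 0 < lamMin A := hl.trans_le hlA
  have hB : 0 < lamMin B := hl.trans_le hlB
  calc (lamMin B)⁻¹ = (lamMin A)⁻¹ + (lamMin A - lamMin B) / (lamMin A * lamMin B) := by
        field_simp; ring
    _ ≤ (lamMin A)⁻¹ + ‖A - B‖ / l ^ 2 := by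
        rw [sq]
        gcongr
        linarith [lamMin_sub_norm_sub_le A B]

lemma norm_symm_le_inv_lamMin_mul {A : Euc n ≃L[ℝ] Euc n} (hA : 0 < lamMin (clm A))
    (v : Euc n) : ‖A.symm v‖ ≤ (lamMin (clm A))⁻¹ * ‖v‖ := by
  set u := A.symm v
  have h : lamMin (clm A) * ‖u‖ * ‖u‖ ≤ ‖v‖ * ‖u‖ := by
    calc lamMin (clm A) * ‖u‖ * ‖u‖ = lamMin (clm A) * ‖u‖ ^ 2 := by ring
      _ ≤ ⟪clm A u, u⟫ := lamMin_mul_norm_sq_le_inner _ u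
      _ = ⟪v, u⟫ := by simp [clm, u]
      _ ≤ ‖v‖ * ‖u‖ := real_inner_le_norm _ _
  rw [le_inv_mul_iff₀ hA]
  rcases (norm_nonneg u).eq_or_lt with hu | hu
  · rw [← hu, mul_zero]; exact norm_nonneg v
  · exact le_of_mul_le_mul_right h hu

end Rayleigh

lemma continuousOn_of_norm_sub_le_mul_rpow {E F : Type*} [SeminormedAddCommGroup E]
    [SeminormedAddCommGroup F] {f : E → F} {s : Set E} {H β : ℝ} (hβ : 0 < β)
    (hf : ∀ x ∈ s, ∀ y ∈ s, ‖f x - f y‖ ≤ H * ‖x - y‖ ^ β) : ContinuousOn f s := by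
  intro x hx
  rw [ContinuousWithinAt, tendsto_iff_norm_sub_tendsto_zero]
  have hlim : Tendsto (fun y => H * ‖y - x‖ ^ β) (𝓝 x) (𝓝 0) := by
    have : Continuous (fun y => H * ‖y - x‖ ^ β) := by fun_prop (disch := exact hβ.le)
    simpa [Real.zero_rpow hβ.ne'] using this.tendsto x
  exact squeeze_zero' (Eventually.of_forall fun _ => norm_nonneg _)
    (eventually_nhdsWithin_of_forall fun y hy => hf y hy x hx) (hlim.mono_left nhdsWithin_le_nhds)

lemma exists_pos_le_lamMin_of_isCompact {α : Type*} [TopologicalSpace α] {n : ℕ}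
    {f : α → Euc n →L[ℝ] Euc n} {K : Set α} (hK : IsCompact K) (hf : ContinuousOn f K)
    (hPD : ∀ x ∈ K, IsSymPD (f x)) : ∃ l > 0, ∀ x ∈ K, l ≤ lamMin (f x) := by
  rcases K.eq_empty_or_nonempty with rfl | hne
  · exact ⟨1, one_pos, by simp⟩
  obtain ⟨x₀, hx₀, hmin⟩ :=
    hK.exists_isMinOn hne (lipschitzWith_lamMin.continuous.comp_continuousOn hf)
  exact ⟨_, lamMin_pos (hPD x₀ hx₀), hmin⟩

section Ellipses

variable {n : ℕ}

lemma add_image_ball_subset_add_image_ball (A B : Euc n ≃L[ℝ] Euc n)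
    (hB : 0 < lamMin (clm B)) (X Y : Euc n) {r s : ℝ}
    (hrs : r + (lamMin (clm B))⁻¹ * (‖X - Y‖ + ‖clm A - clm B‖ * r) ≤ s) :
    (fun W => X + A W) '' ball 0 r ⊆ (fun W => Y + B W) '' ball 0 s := by
  rintro _ ⟨W, hW, rfl⟩
  rw [mem_ball_zero_iff] at hW
  have hW' : B.symm (X - Y + A W) = W + B.symm (X - Y + (clm A - clm B) W) := by
    apply B.injective
    simp only [map_add, ContinuousLinearEquiv.apply_symm_apply, sub_apply, clm,
      ContinuousLinearEquiv.coe_coe]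
    abel
  refine ⟨B.symm (X - Y + A W), mem_ball_zero_iff.mpr ?_, by
    simp only [ContinuousLinearEquiv.apply_symm_apply]; abel⟩
  calc ‖B.symm (X - Y + A W)‖
      ≤ ‖W‖ + (lamMin (clm B))⁻¹ * ‖X - Y + (clm A - clm B) W‖ := by
        rw [hW']; exact (norm_add_le _ _).trans (by gcongr; exact norm_symm_le_inv_lamMin_mul hB _)
    _ ≤ ‖W‖ + (lamMin (clm B))⁻¹ * (‖X - Y‖ + ‖clm A - clm B‖ * ‖W‖) := by
        gcongr
        exact (norm_add_le _ _).trans (by gcongr; exact (clm A - clm B).le_opNorm W)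
    _ < r + (lamMin (clm B))⁻¹ * (‖X - Y‖ + ‖clm A - clm B‖ * r) :=
        add_lt_add_of_lt_of_le hW (by gcongr)
    _ ≤ s := hrs

variable {Λ : Euc n → (Euc n ≃L[ℝ] Euc n)} {X Y : Euc n} {l E M C β r : ℝ}

lemma BLam_subset_BLam_add (hl : 0 < l) (hlX : l ≤ lamMin (clm (Λ X)))
    (hlY : l ≤ lamMin (clm (Λ Y))) (hr : 0 < r) (hXY : ‖X - Y‖ ≤ M * r)
    (hΛ : ‖clm (Λ X) - clm (Λ Y)‖ ≤ E * r ^ β) (hC : l⁻¹ * E * (l⁻¹ * M + 1) ≤ C) :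
    BLam Λ X r ⊆ BLam Λ Y (r + (lamMin (clm (Λ X)))⁻¹ * ‖X - Y‖ + C * r ^ (1 + β)) := by
  refine add_image_ball_subset_add_image_ball _ _ (hl.trans_le hlY) X Y ?_
  have hY : (lamMin (clm (Λ Y)))⁻¹ ≤ l⁻¹ := inv_anti₀ hl hlY
  have hE : 0 ≤ E := nonneg_of_mul_nonneg_left ((norm_nonneg _).trans hΛ) (by positivity)
  calc r + (lamMin (clm (Λ Y)))⁻¹ * (‖X - Y‖ + ‖clm (Λ X) - clm (Λ Y)‖ * r)
      = r + (lamMin (clm (Λ Y)))⁻¹ * ‖X - Y‖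
          + (lamMin (clm (Λ Y)))⁻¹ * ‖clm (Λ X) - clm (Λ Y)‖ * r := by ring
    _ ≤ r + ((lamMin (clm (Λ X)))⁻¹ + ‖clm (Λ X) - clm (Λ Y)‖ / l ^ 2) * ‖X - Y‖
          + l⁻¹ * ‖clm (Λ X) - clm (Λ Y)‖ * r := by
        gcongr; exact inv_lamMin_le_inv_lamMin_add hl hlX hlY
    _ = r + (lamMin (clm (Λ X)))⁻¹ * ‖X - Y‖
          + l⁻¹ * ‖clm (Λ X) - clm (Λ Y)‖ * (l⁻¹ * ‖X - Y‖ + r) := by ring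
    _ ≤ r + (lamMin (clm (Λ X)))⁻¹ * ‖X - Y‖ + l⁻¹ * (E * r ^ β) * (l⁻¹ * (M * r) + r) := by
        gcongr
    _ = r + (lamMin (clm (Λ X)))⁻¹ * ‖X - Y‖ + l⁻¹ * E * (l⁻¹ * M + 1) * (r * r ^ β) := by
        ring
    _ ≤ r + (lamMin (clm (Λ X)))⁻¹ * ‖X - Y‖ + C * r ^ (1 + β) := by
        rw [Real.rpow_add hr, Real.rpow_one]
        gcongr

lemma BLam_sub_subset_BLam (hl : 0 < l) (hlX : l ≤ lamMin (clm (Λ X))) (hr : 0 < r)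
    (hΛ : ‖clm (Λ X) - clm (Λ Y)‖ ≤ E * r ^ β) (hC : l⁻¹ * E ≤ C) :
    BLam Λ Y (r - (lamMin (clm (Λ X)))⁻¹ * ‖X - Y‖ - C * r ^ (1 + β)) ⊆ BLam Λ X r := by
  refine add_image_ball_subset_add_image_ball _ _ (hl.trans_le hlX) Y X ?_
  set s := r - (lamMin (clm (Λ X)))⁻¹ * ‖X - Y‖ - C * r ^ (1 + β)
  have hX : (lamMin (clm (Λ X)))⁻¹ ≤ l⁻¹ := inv_anti₀ hl hlX
  have hX0 : 0 ≤ (lamMin (clm (Λ X)))⁻¹ := (inv_pos.mpr (hl.trans_le hlX)).le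
  have hE : 0 ≤ E := nonneg_of_mul_nonneg_left ((norm_nonneg _).trans hΛ) (by positivity)
  have hC0 : 0 ≤ C := (by positivity : 0 ≤ l⁻¹ * E).trans hC
  have hsr : s ≤ r := by
    simp only [s]; nlinarith [norm_nonneg (X - Y), Real.rpow_nonneg hr.le (1 + β)]
  rw [norm_sub_rev Y, norm_sub_rev (clm (Λ Y))]
  calc s + (lamMin (clm (Λ X)))⁻¹ * (‖X - Y‖ + ‖clm (Λ X) - clm (Λ Y)‖ * s)
      = s + (lamMin (clm (Λ X)))⁻¹ * ‖X - Y‖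
          + (lamMin (clm (Λ X)))⁻¹ * ‖clm (Λ X) - clm (Λ Y)‖ * s := by ring
    _ ≤ s + (lamMin (clm (Λ X)))⁻¹ * ‖X - Y‖
          + (lamMin (clm (Λ X)))⁻¹ * ‖clm (Λ X) - clm (Λ Y)‖ * r := by gcongr
    _ ≤ s + (lamMin (clm (Λ X)))⁻¹ * ‖X - Y‖ + l⁻¹ * (E * r ^ β) * r := by gcongr
    _ = s + (lamMin (clm (Λ X)))⁻¹ * ‖X - Y‖ + l⁻¹ * E * (r ^ β * r) := by ring
    _ ≤ s + (lamMin (clm (Λ X)))⁻¹ * ‖X - Y‖ + C * (r ^ β * r) := by gcongr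
    _ = r := by simp only [s]; rw [add_comm 1 β, Real.rpow_add_one hr.ne']; ring

end Ellipses

lemma sub_inv_mul_sub_mul_rpow_pos {a d C r β : ℝ} (ha : 0 < a) (hC : 0 < C) (hβ : 0 < β)
    (hr : 0 < r) (hr₀ : r ≤ (4 * C)⁻¹ ^ β⁻¹) (hd : d ≤ a * r / 2) :
    0 < r - a⁻¹ * d - C * r ^ (1 + β) := by
  have had : a⁻¹ * d ≤ r / 2 := by
    rw [inv_mul_le_iff₀ ha]; linarith
  have hrβ : r ^ β ≤ (4 * C)⁻¹ := by
    calc r ^ β ≤ ((4 * C)⁻¹ ^ β⁻¹) ^ β := by gcongr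
      _ = (4 * C)⁻¹ := Real.rpow_inv_rpow (by positivity) hβ.ne'
  have hCr : C * r ^ (1 + β) ≤ r / 4 := by
    calc C * r ^ (1 + β) = r * (C * r ^ β) := by rw [Real.rpow_add hr, Real.rpow_one]; ring
      _ ≤ r * (C * (4 * C)⁻¹) := by gcongr
      _ = r / 4 := by field_simp
  linarith

/-- Nested nonconcentric ellipses. -/
theorem nested_nonconcentric_ellipses (n : ℕ) (β : ℝ) (hβ : β ∈ Set.Ioo (0 : ℝ) 1)
    (Λ : Euc n → (Euc n ≃L[ℝ] Euc n))
    (hPD : ∀ X : Euc n, IsSymPD (clm (Λ X)))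
    (hHol : HolderOnCompacts Λ β)
    (K : Set (Euc n)) (hK : IsCompact K) (M : ℝ) (hM : 0 < M) :
    ∃ C > 0, ∃ r₀ > 0,
      (∀ X ∈ K, ∀ Y ∈ K, ∀ r : ℝ, 0 < r → ‖X - Y‖ ≤ M * r →
        BLam Λ X r ⊆
          BLam Λ Y (r + (lamMin (clm (Λ X)))⁻¹ * ‖X - Y‖ + C * r ^ (1 + β))) ∧
      (∀ X ∈ K, ∀ Y ∈ K, ∀ r : ℝ, 0 < r → r ≤ r₀ → ‖X - Y‖ ≤ M * r →
        ‖X - Y‖ ≤ lamMin (clm (Λ X)) * r / 2 →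
          0 < r - (lamMin (clm (Λ X)))⁻¹ * ‖X - Y‖ - C * r ^ (1 + β) ∧
          BLam Λ Y (r - (lamMin (clm (Λ X)))⁻¹ * ‖X - Y‖ - C * r ^ (1 + β)) ⊆
            BLam Λ X r) := by
  obtain ⟨hβ0, -⟩ := hβ
  obtain ⟨H, hH, hHK⟩ := hHol K hK
  obtain ⟨l, hl, hlK⟩ := exists_pos_le_lamMin_of_isCompact hK
    (continuousOn_of_norm_sub_le_mul_rpow hβ0 hHK) fun X _ => hPD X
  have hΛ : ∀ X ∈ K, ∀ Y ∈ K, ∀ r : ℝ, 0 < r → ‖X - Y‖ ≤ M * r →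
      ‖clm (Λ X) - clm (Λ Y)‖ ≤ H * M ^ β * r ^ β := fun X hX Y hY r hr hXY =>
    calc ‖clm (Λ X) - clm (Λ Y)‖ ≤ H * ‖X - Y‖ ^ β := hHK X hX Y hY
      _ ≤ H * (M * r) ^ β := by gcongr
      _ = H * M ^ β * r ^ β := by rw [Real.mul_rpow hM.le hr.le, mul_assoc]
  set C := l⁻¹ * (H * M ^ β) * (l⁻¹ * M + 1)
  have hC : 0 < C := by positivity
  refine ⟨C, hC, (4 * C)⁻¹ ^ β⁻¹, by positivity, ?_, ?_⟩
  · intro X hX Y hY r hr hXY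
    exact BLam_subset_BLam_add hl (hlK X hX) (hlK Y hY) hr hXY (hΛ X hX Y hY r hr hXY) le_rfl
  · intro X hX Y hY r hr hr₀ hXY hXYX
    refine ⟨sub_inv_mul_sub_mul_rpow_pos (hl.trans_le (hlK X hX)) hC hβ0 hr hr₀ hXYX,
      BLam_sub_subset_BLam hl (hlK X hX) hr (hΛ X hX Y hY r hr hXY) ?_⟩
    exact le_mul_of_one_le_right (by positivity) (le_add_of_nonneg_left (by positivity))
end

section
/- Let Σ ⊂ ℝ^{n+1} be closed and K ⊂ ℝ^{n+1} compact with Σ ∩ K ≠ ∅. Set δ_K = min{λ_min(K), e_Λ(K)^{-1}}. Let δ ∈ (0, δ_K), X, X̄ ∈ Σ ∩ K, r > 0, r' = λ_max(K)·r, and let P be an affine n-plane through X. Write B_Λ(X, X̄, r) = X + Λ(X̄)·B(0,r). If D[Σ ∩ B(X,r'); P ∩ B(X,r')] ≤ δ·r', then D[Σ ∩ B_Λ(X,X̄,r); P ∩ B_Λ(X,X̄,r)] ≤ (2 + e_Λ(K))·δ·r'. -/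
open MeasureTheory Metric Filter
open scoped RealInnerProductSpace ENNReal Topology

/-!
The ellipse `E = X + Λ(X̄)·B(0,r)` lies in `B(X, r')`, `r' = λ_max r`, and its gauge
`W ↦ ‖Λ(X̄)⁻¹ (W - X)‖` is `λ_min⁻¹`-Lipschitz. Hence a point of `P` at distance `d` from a
point of `E` lies in the dilate of `E` about `X` by the factor `1 + d / (λ_min r)`; as `P` is
star-shaped about `X`, contracting it back by that factor keeps it in `P`, lands in `E`, and
moves it by at most `e_Λ d`. Conversely, a point of `P ∩ E` is first contracted by the factor
`1 - t / (λ_min r)`, for `t` slightly above `δ r'`, and then replaced by a point of `Σ` within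
`t`, which stays in `E`. Both halves of the Hausdorff distance are thus at most `(1 + e_Λ) δ r'`.
-/

section Ellipse

open AffineMap

variable {F : Type*} [NormedAddCommGroup F] [NormedSpace ℝ F] (A : F ≃L[ℝ] F)
  {m M r : ℝ} {X : F}

theorem mem_image_add_ball_iff {Y : F} :
    Y ∈ (fun W => X + A W) '' ball 0 r ↔ ‖A.symm (Y - X)‖ < r := by
  constructor
  · rintro ⟨W, hW, rfl⟩
    simpa using hW
  · intro hY
    exact ⟨A.symm (Y - X), mem_ball_zero_iff.2 hY, by simp⟩

variable {A}

theorem image_add_ball_subset_ball (hM : 0 < M) (hup : ∀ v, ‖A v‖ ≤ M * ‖v‖) :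
    (fun W => X + A W) '' ball 0 r ⊆ ball X (M * r) := by
  rintro _ ⟨W, hW, rfl⟩
  rw [mem_ball_zero_iff] at hW
  rw [mem_ball, dist_self_add_left]
  exact (hup W).trans_lt (mul_lt_mul_of_pos_left hW hM)

theorem mul_norm_symm_le (hlow : ∀ v, m * ‖v‖ ≤ ‖A v‖) (u : F) :
    m * ‖A.symm u‖ ≤ ‖u‖ := by
  simpa using hlow (A.symm u)

theorem norm_symm_lineMap_sub (Z : F) (c : ℝ) (hc : 0 ≤ c) :
    ‖A.symm (lineMap X Z c - X)‖ = c * ‖A.symm (Z - X)‖ := by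
  rw [← vsub_eq_sub, lineMap_vsub_left, vsub_eq_sub, map_smul, norm_smul, Real.norm_of_nonneg hc]

theorem StarConvex.lineMap_mem {P : Set F} (hP : StarConvex ℝ X P) {Z : F} (hZ : Z ∈ P)
    {c : ℝ} (hc₀ : 0 ≤ c) (hc₁ : c ≤ 1) : lineMap X Z c ∈ P := by
  rw [lineMap_apply_module', add_comm]
  exact hP.add_smul_sub_mem hZ hc₀ hc₁

variable {P : Set F} {Y Z : F}

theorem exists_mem_inter_image_ball_dist_le (hm : 0 < m) (hlow : ∀ v, m * ‖v‖ ≤ ‖A v‖)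
    (hP : StarConvex ℝ X P) (hY : Y ∈ (fun W => X + A W) '' ball 0 r) (hZ : Z ∈ P)
    (hZX : dist X Z ≤ M * r) :
    ∃ Z' ∈ P ∩ (fun W => X + A W) '' ball 0 r, dist Y Z' ≤ (1 + M / m) * dist Y Z := by
  rw [mem_image_add_ball_iff] at hY
  have hr : 0 < r := (norm_nonneg _).trans_lt hY
  have hM : 0 ≤ M := nonneg_of_mul_nonneg_left (dist_nonneg.trans hZX) hr
  set s := dist Y Z / m with hs_def
  have hs : 0 ≤ s := by positivity
  have hZr : ‖A.symm (Z - X)‖ < r + s := calc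
    ‖A.symm (Z - X)‖ ≤ ‖A.symm (Y - X)‖ + ‖A.symm (Z - Y)‖ := by
      rw [← sub_add_sub_cancel Z Y X, map_add, add_comm]; exact norm_add_le _ _
    _ < r + s := by
      refine add_lt_add_of_lt_of_le hY ?_
      rw [le_div_iff₀' hm, dist_comm, dist_eq_norm]
      exact mul_norm_symm_le hlow _
  set c := r / (r + s) with hc
  have hc₀ : 0 ≤ c := by positivity
  have hc₁ : c ≤ 1 := div_le_one_of_le₀ (by linarith) (by positivity)
  refine ⟨lineMap X Z c, ⟨hP.lineMap_mem hZ hc₀ hc₁,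
    (mem_image_add_ball_iff A).2 ?_⟩, ?_⟩
  · rw [norm_symm_lineMap_sub Z c hc₀]
    calc c * ‖A.symm (Z - X)‖ < c * (r + s) := by gcongr
      _ = r := by rw [hc]; field_simp
  · calc dist Y (lineMap X Z c) ≤ dist Y Z + dist (lineMap X Z c) Z := by
          rw [dist_comm (lineMap X Z c)]; exact dist_triangle _ _ _
      _ = dist Y Z + (1 - c) * dist X Z := by
          rw [dist_lineMap_right, Real.norm_of_nonneg (by linarith)]
      _ ≤ dist Y Z + (1 - c) * (M * r) := by gcongr
      _ = dist Y Z + s * M * c := by rw [hc]; field_simp; ring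
      _ ≤ dist Y Z + s * M := by
          have := mul_le_of_le_one_right (mul_nonneg hs hM) hc₁; linarith
      _ = (1 + M / m) * dist Y Z := by rw [hs_def]; field_simp

theorem mem_image_ball_of_dist_lineMap_lt (hm : 0 < m) (hlow : ∀ v, m * ‖v‖ ≤ ‖A v‖)
    (hZ : Z ∈ (fun W => X + A W) '' ball 0 r) {t : ℝ} (ht : t ≤ m * r)
    (hY : dist (lineMap X Z (1 - t / (m * r))) Y < t) :
    Y ∈ (fun W => X + A W) '' ball 0 r := by
  rw [mem_image_add_ball_iff] at hZ ⊢
  have hr : 0 < r := (norm_nonneg _).trans_lt hZ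
  set c := 1 - t / (m * r) with hc
  have hc₀ : 0 ≤ c := by rw [sub_nonneg, div_le_one (by positivity)]; exact ht
  calc ‖A.symm (Y - X)‖
        ≤ ‖A.symm (lineMap X Z c - X)‖ + ‖A.symm (Y - lineMap X Z c)‖ := by
        rw [← sub_add_sub_cancel Y (lineMap X Z c : F) X, map_add, add_comm]
        exact norm_add_le _ _
    _ < c * r + t / m := by
        rw [norm_symm_lineMap_sub Z c hc₀]
        refine add_lt_add_of_le_of_lt (by gcongr) ?_
        rw [lt_div_iff₀' hm]
        exact (mul_norm_symm_le hlow _).trans_lt (by rwa [← dist_eq_norm, dist_comm])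
    _ = r := by rw [hc]; field_simp; ring

theorem infDist_inter_image_ball_le (hm : 0 < m) (hM : 0 < M)
    (hlow : ∀ v, m * ‖v‖ ≤ ‖A v‖) (hP : StarConvex ℝ X P) (hXP : X ∈ P)
    (hY : Y ∈ (fun W => X + A W) '' ball 0 r) :
    infDist Y (P ∩ (fun W => X + A W) '' ball 0 r) ≤
      (1 + M / m) * infDist Y (P ∩ ball X (M * r)) := by
  have hr : 0 < r := (norm_nonneg _).trans_lt ((mem_image_add_ball_iff A).1 hY)
  have hk : 0 < 1 + M / m := by positivity
  have hne : (P ∩ ball X (M * r)).Nonempty := ⟨X, hXP, mem_ball_self (by positivity)⟩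
  rw [← div_le_iff₀' hk, le_infDist hne]
  intro Z hZ
  obtain ⟨Z', hZ', hYZ'⟩ :=
    exists_mem_inter_image_ball_dist_le hm hlow hP hY hZ.1 (mem_ball'.1 hZ.2).le
  rw [div_le_iff₀' hk]
  exact (infDist_le_dist_of_mem hZ').trans hYZ'

theorem infDist_inter_image_ball_le_of_forall_infDist_le (hm : 0 < m) (hM : 0 < M)
    (hlow : ∀ v, m * ‖v‖ ≤ ‖A v‖) (hup : ∀ v, ‖A v‖ ≤ M * ‖v‖)
    (hP : StarConvex ℝ X P) {S : Set F} (hS : (S ∩ ball X (M * r)).Nonempty) {ε : ℝ}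
    (hε : ε < m * r)
    (hflat : ∀ W ∈ P ∩ ball X (M * r), infDist W (S ∩ ball X (M * r)) ≤ ε)
    (hZ : Z ∈ P ∩ (fun W => X + A W) '' ball 0 r) :
    infDist Z (S ∩ (fun W => X + A W) '' ball 0 r) ≤ (1 + M / m) * ε := by
  have hr : 0 < r := (norm_nonneg _).trans_lt ((mem_image_add_ball_iff A).1 hZ.2)
  have hZB : Z ∈ ball X (M * r) := image_add_ball_subset_ball hM hup hZ.2
  have hε₀ : 0 ≤ ε := infDist_nonneg.trans (hflat Z ⟨hZ.1, hZB⟩)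
  -- the bound `(1 + M / m) * t` holds for every `t ∈ (ε, m r)`; let `t ↓ ε`
  have hlim : Tendsto (fun t => (1 + M / m) * t) (𝓝[>] ε) (𝓝 ((1 + M / m) * ε)) :=
    ((continuous_const_mul _).tendsto ε).mono_left nhdsWithin_le_nhds
  refine ge_of_tendsto hlim ?_
  filter_upwards [Ioo_mem_nhdsGT hε] with t ⟨hεt, htm⟩
  have hq : 0 ≤ t / (m * r) := div_nonneg (hε₀.trans hεt.le) (by positivity)
  set c := 1 - t / (m * r) with hc
  have hc₀ : 0 ≤ c := by rw [sub_nonneg, div_le_one (by positivity)]; exact htm.le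
  have hc₁ : c ≤ 1 := by linarith
  have hZ' : lineMap X Z c ∈ P ∩ ball X (M * r) := by
    refine ⟨hP.lineMap_mem hZ.1 hc₀ hc₁, ?_⟩
    rw [mem_ball, dist_lineMap_left, Real.norm_of_nonneg hc₀, dist_comm]
    exact (mul_le_of_le_one_left dist_nonneg hc₁).trans_lt hZB
  obtain ⟨Y, hY, hZ'Y⟩ := (infDist_lt_iff hS).1 ((hflat _ hZ').trans_lt hεt)
  have hYE := mem_image_ball_of_dist_lineMap_lt hm hlow hZ.2 htm.le hZ'Y
  calc infDist Z (S ∩ (fun W => X + A W) '' ball 0 r) ≤ dist Z Y :=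
        infDist_le_dist_of_mem ⟨hY.1, hYE⟩
    _ ≤ dist (lineMap X Z c) Z + dist (lineMap X Z c) Y := dist_triangle_left _ _ _
    _ ≤ t / (m * r) * (M * r) + t := by
        rw [dist_lineMap_right, hc, sub_sub_cancel, Real.norm_of_nonneg hq, dist_comm X]
        have := mul_le_mul_of_nonneg_left (mem_ball.1 hZB).le hq
        linarith
    _ = (1 + M / m) * t := by field_simp; ring

theorem hausdorffDist_inter_image_ball_le (hm : 0 < m) (hM : 0 < M)
    (hlow : ∀ v, m * ‖v‖ ≤ ‖A v‖) (hup : ∀ v, ‖A v‖ ≤ M * ‖v‖) {S : Set F}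
    (hXS : X ∈ S) (hXP : X ∈ P) (hP : StarConvex ℝ X P) (hr : 0 < r) {ε : ℝ}
    (hε : ε < m * r)
    (hflat : hausdorffDist (S ∩ ball X (M * r)) (P ∩ ball X (M * r)) ≤ ε) :
    hausdorffDist (S ∩ (fun W => X + A W) '' ball 0 r) (P ∩ (fun W => X + A W) '' ball 0 r) ≤
      (1 + M / m) * ε := by
  have hXB : X ∈ ball X (M * r) := mem_ball_self (by positivity)
  have hSB : (S ∩ ball X (M * r)).Nonempty := ⟨X, hXS, hXB⟩
  have hfin : hausdorffEDist (S ∩ ball X (M * r)) (P ∩ ball X (M * r)) ≠ ⊤ :=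
    hausdorffEDist_ne_top_of_nonempty_of_bounded hSB ⟨X, hXP, hXB⟩
      (isBounded_ball.subset Set.inter_subset_right) (isBounded_ball.subset Set.inter_subset_right)
  have hε₀ : 0 ≤ ε := hausdorffDist_nonneg.trans hflat
  refine hausdorffDist_le_of_infDist (by positivity) (fun Y hY => ?_) (fun Z hZ => ?_)
  · calc infDist Y (P ∩ (fun W => X + A W) '' ball 0 r)
          ≤ (1 + M / m) * infDist Y (P ∩ ball X (M * r)) :=
          infDist_inter_image_ball_le hm hM hlow hP hXP hY.2
      _ ≤ (1 + M / m) * ε := by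
          gcongr
          have hYB : Y ∈ S ∩ ball X (M * r) :=
            ⟨hY.1, image_add_ball_subset_ball hM hup hY.2⟩
          exact (infDist_le_hausdorffDist_of_mem hYB hfin).trans hflat
  · refine infDist_inter_image_ball_le_of_forall_infDist_le hm hM hlow hup hP hSB hε
      (fun W hW => ?_) hZ
    rw [hausdorffEDist_comm] at hfin
    rw [hausdorffDist_comm] at hflat
    exact (infDist_le_hausdorffDist_of_mem hW hfin).trans hflat

end Ellipse

section Rayleigh

open ContinuousLinearMap

variable {n : ℕ} (A : Euc n →L[ℝ] Euc n)

theorem rayleighQuotient_eq_inner_div (x : Euc n) :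
    A.rayleighQuotient x = ⟪A x, x⟫ / ‖x‖ ^ 2 := by
  rw [rayleighQuotient, reApplyInnerSelf_apply, RCLike.re_to_real]

theorem abs_inner_le_opNorm_of_norm_eq_one {v : Euc n} (hv : ‖v‖ = 1) :
    |⟪A v, v⟫| ≤ ‖A‖ := by
  simpa [rayleighQuotient_eq_inner_div, hv] using A.rayleighQuotient_le_norm v

theorem bddBelow_rayleigh : BddBelow {t : ℝ | ∃ v : Euc n, ‖v‖ = 1 ∧ ⟪A v, v⟫ = t} :=
  ⟨-‖A‖, by
    rintro _ ⟨v, hv, rfl⟩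
    exact neg_le_of_abs_le (abs_inner_le_opNorm_of_norm_eq_one A hv)⟩

theorem bddAbove_rayleigh : BddAbove {t : ℝ | ∃ v : Euc n, ‖v‖ = 1 ∧ ⟪A v, v⟫ = t} :=
  ⟨‖A‖, by
    rintro _ ⟨v, hv, rfl⟩
    exact le_of_abs_le (abs_inner_le_opNorm_of_norm_eq_one A hv)⟩

theorem exists_norm_eq_one_inner_eq_rayleighQuotient {x : Euc n} (hx : x ≠ 0) :
    ∃ v : Euc n, ‖v‖ = 1 ∧ ⟪A v, v⟫ = A.rayleighQuotient x := by
  obtain ⟨v, hv, hvx⟩ :=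
    (A.image_rayleigh_eq_image_rayleigh_sphere one_pos).subset ⟨x, hx, rfl⟩
  have hv : ‖v‖ = 1 := by simpa using hv
  exact ⟨v, hv, by simp [← hvx, rayleighQuotient_eq_inner_div, hv]⟩

theorem lamMin_le_rayleighQuotient {x : Euc n} (hx : x ≠ 0) : lamMin A ≤ A.rayleighQuotient x :=
  csInf_le (bddBelow_rayleigh A) (exists_norm_eq_one_inner_eq_rayleighQuotient A hx)

theorem rayleighQuotient_le_lamMax {x : Euc n} (hx : x ≠ 0) : A.rayleighQuotient x ≤ lamMax A :=
  le_csSup (bddAbove_rayleigh A) (exists_norm_eq_one_inner_eq_rayleighQuotient A hx)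

theorem lamMin_mul_norm_le_norm_apply (v : Euc n) : lamMin A * ‖v‖ ≤ ‖A v‖ := by
  rcases eq_or_ne v 0 with rfl | hv
  · simp
  have hv' : 0 < ‖v‖ := norm_pos_iff.2 hv
  have h := lamMin_le_rayleighQuotient A hv
  rw [rayleighQuotient_eq_inner_div, le_div_iff₀ (by positivity)] at h
  refine le_of_mul_le_mul_right ?_ hv'
  calc lamMin A * ‖v‖ * ‖v‖ = lamMin A * ‖v‖ ^ 2 := by ring
    _ ≤ ⟪A v, v⟫ := h
    _ ≤ ‖A v‖ * ‖v‖ := real_inner_le_norm _ _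

variable {A}

theorem opNorm_le_lamMax (hA : IsSymPD A) : ‖A‖ ≤ lamMax A := by
  have hnonneg : ∀ x, 0 ≤ A.rayleighQuotient x := by
    intro x
    rcases eq_or_ne x 0 with rfl | hx
    · simp
    · rw [rayleighQuotient_eq_inner_div]
      exact div_nonneg (hA.2 x hx).le (by positivity)
  obtain ⟨e, he⟩ := exists_ne (0 : Euc n)
  have hlamMax : 0 ≤ lamMax A := (hnonneg e).trans (rayleighQuotient_le_lamMax A he)
  rw [A.norm_eq_iSup_rayleighQuotient hA.1]
  refine ciSup_le fun x => ?_
  rw [abs_of_nonneg (hnonneg x)]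
  rcases eq_or_ne x 0 with rfl | hx
  · simpa using hlamMax
  · exact rayleighQuotient_le_lamMax A hx

theorem norm_apply_le_lamMax_mul_norm (hA : IsSymPD A) (v : Euc n) :
    ‖A v‖ ≤ lamMax A * ‖v‖ :=
  (A.le_opNorm v).trans (by gcongr; exact opNorm_le_lamMax hA)

end Rayleigh

section LocalBounds

variable {n : ℕ} {Λ : Euc n → (Euc n ≃L[ℝ] Euc n)} {S : Set (Euc n)} {X : Euc n}

theorem lamMinOn_le_lamMin (h : 0 < lamMinOn Λ S) (hX : infDist X S ≤ 1) :
    lamMinOn Λ S ≤ lamMin (clm (Λ X)) := by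
  refine csInf_le ?_ ⟨X, hX, rfl⟩
  by_contra hb
  exact h.ne' (Real.sInf_of_not_bddBelow hb)

theorem lamMax_le_lamMaxOn (h : 0 < lamMaxOn Λ S) (hX : infDist X S ≤ 1) :
    lamMax (clm (Λ X)) ≤ lamMaxOn Λ S := by
  refine le_csSup ?_ ⟨X, hX, rfl⟩
  by_contra hb
  exact h.ne' (Real.sSup_of_not_bddAbove hb)

end LocalBounds

theorem euclidean_flat_implies_anisotropic_flat_general (n : ℕ)
    (Λ : Euc n → (Euc n ≃L[ℝ] Euc n))
    (hPD : ∀ X : Euc n, IsSymPD (clm (Λ X)))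
    (S : Set (Euc n))
    (K : Set (Euc n))
    (δ : ℝ)
    (hδ : δ ∈ Set.Ioo (0 : ℝ) (min (lamMinOn Λ (S ∩ K)) (eLam Λ (S ∩ K))⁻¹))
    (X Xb : Euc n) (hX : X ∈ S ∩ K) (hXb : Xb ∈ S ∩ K)
    (r : ℝ) (hr : 0 < r)
    (P : AffineSubspace ℝ (Euc n)) (hXP : X ∈ P)
    (hflat : Metric.hausdorffDist (S ∩ Metric.ball X (lamMaxOn Λ (S ∩ K) * r))
        ((P : Set (Euc n)) ∩ Metric.ball X (lamMaxOn Λ (S ∩ K) * r)) ≤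
        δ * (lamMaxOn Λ (S ∩ K) * r)) :
    Metric.hausdorffDist (S ∩ BLam2 Λ X Xb r) ((P : Set (Euc n)) ∩ BLam2 Λ X Xb r) ≤
      (2 + eLam Λ (S ∩ K)) * δ * (lamMaxOn Λ (S ∩ K) * r) := by
  obtain ⟨hδ₀, hδ⟩ := hδ
  set lm := lamMinOn Λ (S ∩ K)
  set lM := lamMaxOn Λ (S ∩ K)
  have he : eLam Λ (S ∩ K) = lM / lm := rfl
  have hlm : 0 < lm := hδ₀.trans (hδ.trans_le (min_le_left _ _))
  have hδe : δ < lm / lM := by simpa [he] using hδ.trans_le (min_le_right _ _)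
  have hlM : 0 < lM := (div_pos_iff_of_pos_left hlm).1 (hδ₀.trans hδe)
  have hXb₁ : infDist Xb (S ∩ K) ≤ 1 := by rw [infDist_zero_of_mem hXb]; exact zero_le_one
  have hlow (v : Euc n) : lm * ‖v‖ ≤ ‖Λ Xb v‖ :=
    (mul_le_mul_of_nonneg_right (lamMinOn_le_lamMin hlm hXb₁) (norm_nonneg v)).trans
      (lamMin_mul_norm_le_norm_apply _ v)
  have hup (v : Euc n) : ‖Λ Xb v‖ ≤ lM * ‖v‖ :=
    (norm_apply_le_lamMax_mul_norm (hPD Xb) v).trans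
      (by gcongr; exact lamMax_le_lamMaxOn hlM hXb₁)
  have hε : δ * (lM * r) < lm * r := by
    rw [← mul_assoc]; gcongr; rwa [← lt_div_iff₀ hlM]
  calc _ ≤ (1 + lM / lm) * (δ * (lM * r)) :=
        hausdorffDist_inter_image_ball_le hlm hlM hlow hup hX.1 hXP
          (P.convex.starConvex hXP) hr hε hflat
    _ ≤ (2 + eLam Λ (S ∩ K)) * δ * (lM * r) := by
        rw [he, mul_assoc]; gcongr; linarith

/-- Euclidean flatness implies anisotropic flatness. -/
theorem euclidean_flat_implies_anisotropic_flat (n : ℕ)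
    (Λ : Euc n → (Euc n ≃L[ℝ] Euc n))
    (hPD : ∀ X : Euc n, IsSymPD (clm (Λ X)))
    (S : Set (Euc n)) (hS : IsClosed S)
    (K : Set (Euc n)) (hK : IsCompact K) (hSK : (S ∩ K).Nonempty)
    (δ : ℝ)
    (hδ : δ ∈ Set.Ioo (0 : ℝ) (min (lamMinOn Λ (S ∩ K)) (eLam Λ (S ∩ K))⁻¹))
    (X Xb : Euc n) (hX : X ∈ S ∩ K) (hXb : Xb ∈ S ∩ K)
    (r : ℝ) (hr : 0 < r)
    (P : AffineSubspace ℝ (Euc n)) (hXP : X ∈ P)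
    (hPdim : Module.finrank ℝ P.direction = n)
    (hflat : Metric.hausdorffDist (S ∩ Metric.ball X (lamMaxOn Λ (S ∩ K) * r))
        ((P : Set (Euc n)) ∩ Metric.ball X (lamMaxOn Λ (S ∩ K) * r)) ≤
        δ * (lamMaxOn Λ (S ∩ K) * r)) :
    Metric.hausdorffDist (S ∩ BLam2 Λ X Xb r) ((P : Set (Euc n)) ∩ BLam2 Λ X Xb r) ≤
      (2 + eLam Λ (S ∩ K)) * δ * (lamMaxOn Λ (S ∩ K) * r) :=
  euclidean_flat_implies_anisotropic_flat_general n Λ hPD S K δ hδ X Xb hX hXb r hr P hXP hflat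
end

section
/- Suppose μ and Λ satisfy the continuity and density assumptions of Theorem 1. Let K ⊂ ℝ^{n+1} be compact, X₀ ∈ Σ ∩ K, let μ̃ be the push-forward of μ under the map Z ↦ Λ(X₀)^{-1}Z, and set Y₀ = Λ(X₀)^{-1}X₀. Then there exist C_K > 0 and r_K > 0, depending only on K, Λ and n, such that for all r ∈ (0, r_K]: | (n+2)/(ω_n r^{n+2}) · ∫_{B(Y₀,r)} |Z − Y₀|² dμ̃(Z) − n | ≤ C_K·r^α. -/
open MeasureTheory Metric Filter
open scoped RealInnerProductSpace ENNReal Topology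

/-! Pushing `μ` forward by `Λ(X₀)⁻¹` turns the ellipses `B_Λ(X₀, s)` into the round balls
`B(Y₀, s)`, so the density assumption says that `F(s) = μ̃(B(Y₀, s))` is `ω_n sⁿ` up to a relative
error `C s^α ≤ C r^α` for `s ≤ r`. By the layer-cake formula the second moment over `B(Y₀, r)` is
`∫₀ʳ 2s (F(r) − F(s)) ds`; for the model `F(s) = ω_n sⁿ` this is exactly `n ω_n r^{n+2}/(n+2)`, and
the relative error costs at most `(n + 4) C r^α` in the normalized moment. -/

open Set

lemma omegaN_pos (n : ℕ) : 0 < omegaN n :=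
  ENNReal.toReal_pos (measure_ball_pos volume _ one_pos).ne' measure_ball_lt_top.ne

lemma measure_map_symm_ball {E : Type*} [NormedAddCommGroup E] [NormedSpace ℝ E]
    [MeasurableSpace E] [BorelSpace E] (A : E ≃L[ℝ] E) (μ : Measure E) (x : E) (t : ℝ) :
    μ.map A.symm (ball (A.symm x) t) = μ ((fun W => x + A W) '' ball 0 t) := by
  rw [Measure.map_apply A.symm.continuous.measurable measurableSet_ball]
  congr 1
  ext Z
  simp only [mem_preimage, mem_ball, dist_eq_norm, mem_image, sub_zero]
  constructor
  · intro hZ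
    refine ⟨A.symm Z - A.symm x, by simpa using hZ, ?_⟩
    rw [map_sub, A.apply_symm_apply, A.apply_symm_apply, add_sub_cancel]
  · rintro ⟨W, hW, rfl⟩
    rwa [map_add, A.symm_apply_apply, add_sub_cancel_left]

lemma measure_BLam_lt_top {n : ℕ} (Λ : Euc n → (Euc n ≃L[ℝ] Euc n)) (μ : Measure (Euc n))
    [IsLocallyFiniteMeasure μ] (X : Euc n) (t : ℝ) : μ (BLam Λ X t) < ∞ :=
  (measure_mono (image_mono ball_subset_closedBall)).trans_lt
    ((isCompact_closedBall 0 t).image (by fun_prop)).measure_lt_top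

lemma image_sq_Ioc {r : ℝ} (hr : 0 ≤ r) : (fun s : ℝ => s ^ 2) '' Ioc 0 r = Ioc 0 (r ^ 2) := by
  ext t
  constructor
  · rintro ⟨s, ⟨hs0, hsr⟩, rfl⟩
    exact ⟨by positivity, pow_le_pow_left₀ hs0.le hsr 2⟩
  · rintro ⟨ht0, htr⟩
    refine ⟨√t, ⟨Real.sqrt_pos.2 ht0, ?_⟩, Real.sq_sqrt ht0.le⟩
    simpa [Real.sqrt_sq hr] using Real.sqrt_le_sqrt htr

lemma setIntegral_dist_sq_ball {X : Type*} [PseudoMetricSpace X] [MeasurableSpace X]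
    [OpensMeasurableSpace X] (ν : Measure X) (y : X) {r : ℝ} (hr : 0 < r)
    (hfin : ν (ball y r) ≠ ∞) :
    ∫ z in ball y r, dist z y ^ 2 ∂ν =
      ∫ s in 0..r, 2 * s * (ν.real (ball y r) - ν.real (ball y s)) := by
  have hle : ∀ᵐ z ∂ν.restrict (ball y r), dist z y ^ 2 ≤ r ^ 2 := by
    filter_upwards [ae_restrict_mem measurableSet_ball] with z hz
    gcongr
    exact (mem_ball.1 hz).le
  have : IsFiniteMeasure (ν.restrict (ball y r)) := isFiniteMeasure_restrict.2 hfin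
  have hint : Integrable (fun z => dist z y ^ 2) (ν.restrict (ball y r)) :=
    (integrable_const (r ^ 2)).mono' (by fun_prop) <| hle.mono fun z hz => by
      rwa [Real.norm_of_nonneg (by positivity)]
  rw [hint.integral_eq_integral_Ioc_meas_le (.of_forall fun z => by positivity) hle,
    ← image_sq_Ioc hr.le, integral_image_eq_integral_abs_deriv_smul measurableSet_Ioc
      (fun s _ => (hasDerivAt_pow 2 s).hasDerivWithinAt)
      ((pow_left_strictMonoOn₀ two_ne_zero).injOn.mono fun s hs => le_of_lt hs.1),
    intervalIntegral.integral_of_le hr.le]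
  refine setIntegral_congr_fun measurableSet_Ioc fun s ⟨hs0, hsr⟩ => ?_
  have hset : {z | s ^ 2 ≤ dist z y ^ 2} ∩ ball y r = ball y r \ ball y s := by
    ext z
    simp only [mem_inter_iff, mem_ofPred_eq, Set.mem_sdiff, mem_ball, not_lt]
    rw [pow_le_pow_iff_left₀ hs0.le dist_nonneg two_ne_zero]
    tauto
  rw [measureReal_restrict_apply (measurableSet_le (by fun_prop) (by fun_prop)), hset,
    measureReal_sdiff (ball_subset_ball hsr) measurableSet_ball hfin]
  simp [abs_of_pos hs0]

lemma intervalIntegrable_measureReal_ball {X : Type*} [PseudoMetricSpace X] [MeasurableSpace X]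
    {ν : Measure X} {y : X} {r : ℝ} (hr : 0 ≤ r) (hfin : ν (ball y r) ≠ ∞) :
    IntervalIntegrable (fun s => ν.real (ball y s)) volume 0 r := by
  refine MonotoneOn.intervalIntegrable fun s _ s' hs' hss' =>
    measureReal_mono (ball_subset_ball hss') ?_
  rw [uIcc_of_le hr] at hs'
  exact ne_top_of_le_ne_top hfin (measure_mono (ball_subset_ball hs'.2))

lemma abs_normalized_second_moment_sub_le {F : ℝ → ℝ} {n : ℕ} {ω r ε : ℝ}
    (hω : 0 < ω) (hr : 0 < r)
    (hF : IntervalIntegrable F volume 0 r)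
    (hbound : ∀ s ∈ Ioc 0 r, |F s - ω * s ^ n| ≤ ε * (ω * s ^ n)) :
    |(n + 2) / (ω * r ^ (n + 2)) * (∫ s in 0..r, 2 * s * (F r - F s)) - n| ≤ (n + 4) * ε := by
  have hpow : IntervalIntegrable (fun s : ℝ => 2 * s * (ω * s ^ n)) volume 0 r :=
    (by fun_prop : Continuous _).intervalIntegrable _ _
  have hJ : ∫ s in 0..r, 2 * s * (ω * s ^ n) = 2 * ω * r ^ (n + 2) / (n + 2) := by
    have : ∀ s : ℝ, 2 * s * (ω * s ^ n) = 2 * ω * s ^ (n + 1) := fun s => by ring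
    simp_rw [this, intervalIntegral.integral_const_mul, integral_pow]
    push_cast
    ring
  have hD : |∫ s in 0..r, 2 * s * (F s - ω * s ^ n)| ≤ ε * (2 * ω * r ^ (n + 2) / (n + 2)) := by
    rw [← hJ, ← intervalIntegral.integral_const_mul, ← Real.norm_eq_abs]
    refine intervalIntegral.norm_integral_le_of_norm_le hr.le
      (.of_forall fun s hs => ?_) (hpow.const_mul ε)
    rw [Real.norm_eq_abs, abs_mul, abs_of_pos (by linarith [hs.1] : 0 < 2 * s)]
    calc 2 * s * |F s - ω * s ^ n| ≤ 2 * s * (ε * (ω * s ^ n)) := by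
          gcongr
          · linarith [hs.1]
          · exact hbound s hs
      _ = _ := by ring
  have hI : ∫ s in 0..r, 2 * s * (F r - F s) =
      (F r - ω * r ^ n) * r ^ 2 + (ω * r ^ (n + 2) - 2 * ω * r ^ (n + 2) / (n + 2))
        - ∫ s in 0..r, 2 * s * (F s - ω * s ^ n) := by
    have hFs : IntervalIntegrable (fun s => 2 * s * (F s - ω * s ^ n)) volume 0 r :=
      (hF.sub ((by fun_prop : Continuous fun s : ℝ => ω * s ^ n).intervalIntegrable _ _)
        ).continuousOn_mul (by fun_prop)
    have : ∀ s : ℝ, 2 * s * (F r - F s) = 2 * (F r - ω * r ^ n + ω * r ^ n) * s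
        - 2 * s * (ω * s ^ n) - 2 * s * (F s - ω * s ^ n) := fun s => by ring
    simp_rw [this]
    rw [intervalIntegral.integral_sub _ hFs, intervalIntegral.integral_sub _ hpow, hJ,
      intervalIntegral.integral_const_mul, integral_id]
    · ring
    all_goals exact (by fun_prop : Continuous _).intervalIntegrable _ _
  have hP : 0 < ω * r ^ n := by positivity
  have hQ : 0 < ω * r ^ (n + 2) := by positivity
  have hFr : |F r - ω * r ^ n| / (ω * r ^ n) ≤ ε := by
    rw [div_le_iff₀ hP]; exact hbound r ⟨hr, le_rfl⟩
  have hD' : |∫ s in 0..r, 2 * s * (F s - ω * s ^ n)| / (ω * r ^ (n + 2)) ≤ 2 * ε / (n + 2) := by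
    rw [div_le_iff₀ hQ]; exact hD.trans_eq (by ring)
  calc _ = |(n + 2) * ((F r - ω * r ^ n) / (ω * r ^ n))
          - (n + 2) * ((∫ s in 0..r, 2 * s * (F s - ω * s ^ n)) / (ω * r ^ (n + 2)))| := by
        rw [hI]; congr 1; field_simp; ring
    _ ≤ (n + 2) * (|F r - ω * r ^ n| / (ω * r ^ n))
          + (n + 2) * (|∫ s in 0..r, 2 * s * (F s - ω * s ^ n)| / (ω * r ^ (n + 2))) := by
        refine (abs_sub _ _).trans_eq ?_
        rw [abs_mul, abs_mul, abs_div, abs_div, abs_of_pos hP, abs_of_pos hQ,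
          abs_of_pos (by positivity : (0 : ℝ) < n + 2)]
    _ ≤ (n + 2) * ε + (n + 2) * (2 * ε / (n + 2)) := by gcongr
    _ = (n + 4) * ε := by field_simp; ring

theorem trace_moment_estimate_general (n : ℕ) (α : ℝ)
    (hα : α ∈ Set.Ioo (0 : ℝ) 1)
    (Λ : Euc n → (Euc n ≃L[ℝ] Euc n))
    (μ : Measure (Euc n)) [IsLocallyFiniteMeasure μ]
    (hden : DensityHolder Λ μ α)
    (K : Set (Euc n)) (hK : IsCompact K)
    (X₀ : Euc n) (hX₀ : X₀ ∈ msupport μ ∩ K)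
    (Y₀ : Euc n) (hY₀ : Y₀ = (Λ X₀).symm X₀)
    (μt : Measure (Euc n))
    (hμt : μt = Measure.map (fun Z : Euc n => (Λ X₀).symm Z) μ) :
    ∃ C > 0, ∃ rK > 0, ∀ r : ℝ, 0 < r → r ≤ rK →
      |((n + 2 : ℝ) / (omegaN n * r ^ (n + 2))) *
          (∫ Z in Metric.ball Y₀ r, ‖Z - Y₀‖ ^ 2 ∂μt) - n| ≤ C * r ^ α := by
  obtain ⟨C, hC, hdens⟩ := hden K hK
  refine ⟨(n + 4) * C, by positivity, 1, one_pos, fun r hr hr1 => ?_⟩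
  have hball : ∀ s, μt (ball Y₀ s) = μ (BLam Λ X₀ s) := fun s => by
    rw [hμt, hY₀]; exact measure_map_symm_ball (Λ X₀) μ X₀ s
  have hfin : μt (ball Y₀ r) ≠ ∞ := by rw [hball]; exact (measure_BLam_lt_top Λ μ X₀ r).ne
  simp_rw [← dist_eq_norm]
  rw [setIntegral_dist_sq_ball μt Y₀ hr hfin]
  refine (abs_normalized_second_moment_sub_le (ε := C * r ^ α) (omegaN_pos n) hr
    (intervalIntegrable_measureReal_ball hr.le hfin) fun s hs => ?_).trans_eq (by ring)
  have hd : 0 < omegaN n * s ^ n := mul_pos (omegaN_pos n) (pow_pos hs.1 n)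
  have hratio := hdens X₀ hX₀ s hs.1 (hs.2.trans hr1)
  rw [← hball, ← measureReal_def, div_sub_one hd.ne', abs_div, abs_of_pos hd,
    div_le_iff₀ hd] at hratio
  exact hratio.trans (by gcongr; exacts [hs.1.le, hα.1.le, hs.2])

/-- Trace moment estimate. -/
theorem trace_moment_estimate (n : ℕ) (α β : ℝ)
    (hα : α ∈ Set.Ioo (0 : ℝ) 1) (hβ : β ∈ Set.Ioo (0 : ℝ) 1)
    (Λ : Euc n → (Euc n ≃L[ℝ] Euc n))
    (hPD : ∀ X : Euc n, IsSymPD (clm (Λ X)))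
    (hHol : HolderOnCompacts Λ β)
    (μ : Measure (Euc n)) [IsLocallyFiniteMeasure μ]
    (hden : DensityHolder Λ μ α)
    (K : Set (Euc n)) (hK : IsCompact K)
    (X₀ : Euc n) (hX₀ : X₀ ∈ msupport μ ∩ K)
    (Y₀ : Euc n) (hY₀ : Y₀ = (Λ X₀).symm X₀)
    (μt : Measure (Euc n))
    (hμt : μt = Measure.map (fun Z : Euc n => (Λ X₀).symm Z) μ) :
    ∃ C > 0, ∃ rK > 0, ∀ r : ℝ, 0 < r → r ≤ rK →
      |((n + 2 : ℝ) / (omegaN n * r ^ (n + 2))) *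
          (∫ Z in Metric.ball Y₀ r, ‖Z - Y₀‖ ^ 2 ∂μt) - n| ≤ C * r ^ α :=
  trace_moment_estimate_general n α hα Λ μ hden K hK X₀ hX₀ Y₀ hY₀ μt hμt
end
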